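/- Let 𝔗 be a BHT of a signal ((V,E), f) over a finite connected graph. For every non-root vertex v, there exists a path in G from v to its linking vertex 𝔏(v) such that the signal value of every vertex on the path lies in the closed interval [f(v), f(𝔏(v))]. -/

import Mathlib

open scoped Classical

/-- A (multi)graph given by source and target maps on an edge type. -/
structure BHTGraph (V E : Type*) where
  src : E → V
  tgt : E → V

namespace BHTGraph

variable {V E : Type*} (G : BHTGraph V E)

/-- `e` is an edge joining `x` and `y`. -/
def Ends (e : E) (x y : V) : Prop :=
  (G.src e = x ∧ G.tgt e = y) ∨ (G.src e = y ∧ G.tgt e = x)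

/-- The graph is connected. -/
def Connected : Prop :=
  ∀ a b : V, Relation.ReflTransGen (fun x y => ∃ e, G.Ends e x y) a b

/-- Extension of a vertex signal to vertices and edges, `f(e) = max f(V(e))`. -/
def sig (f : V → ℝ) : V ⊕ E → ℝ
  | .inl v => f v
  | .inr e => max (f (G.src e)) (f (G.tgt e))

/-- `pos` realizes a `G`-ordering: a total ordering of `V ⊕ E` along which the
signal is nondecreasing and every vertex precedes each edge incident to it. -/
def IsGOrdering (f : V → ℝ) (pos : V ⊕ E → ℕ) : Prop :=
  Function.Injective pos ∧
  (∀ a b, pos a ≤ pos b → G.sig f a ≤ G.sig f b) ∧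
  (∀ e : E, pos (.inl (G.src e)) < pos (.inr e) ∧ pos (.inl (G.tgt e)) < pos (.inr e))

/-- Connectivity within the subgraph `G_{<k}` of elements with position `< k`. -/
def ConnB (pos : V ⊕ E → ℕ) (k : ℕ) (a b : V) : Prop :=
  pos (.inl a) < k ∧ pos (.inl b) < k ∧
    Relation.ReflTransGen (fun x y => ∃ e, pos (.inr e) < k ∧ G.Ends e x y) a b

/-- `m` is the `≺`-minimum of the connected component of `v` in `G_{<k}`. -/
def IsCompMin (pos : V ⊕ E → ℕ) (k : ℕ) (m v : V) : Prop :=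
  G.ConnB pos k m v ∧ ∀ w, G.ConnB pos k v w → pos (.inl m) ≤ pos (.inl w)

/-- The `≺`-maximal endpoint of an edge. -/
def maxEnd (pos : V ⊕ E → ℕ) (e : E) : V :=
  if pos (.inl (G.src e)) ≤ pos (.inl (G.tgt e)) then G.tgt e else G.src e

/-- `(p, L)` is a basin hierarchy tree of the signal `(G, f)` with respect to the
`G`-ordering `pos`, rooted at the `≺`-minimal vertex `r`, with linking-vertex map `L`. -/
structure IsBHT (f : V → ℝ) (pos : V ⊕ E → ℕ) (r : V) (p : V → V) (L : V → V) : Prop where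
  ordering : G.IsGOrdering f pos
  root_min : ∀ v, pos (.inl r) ≤ pos (.inl v)
  root_fix : p r = r
  reaches : ∀ v, ∃ n, p^[n] v = r
  spec : ∀ v, v ≠ r → ∃ e : E,
    G.IsCompMin pos (pos (.inr e)) v v ∧
    G.IsCompMin pos (pos (.inr e) + 1) (p v) v ∧
    L v = G.maxEnd pos e

end BHTGraph

/-- `u` is an ancestor of `v` in the tree with parent map `p` (`u ⪯_T v`). -/
def Anc {V : Type*} (p : V → V) (u v : V) : Prop := ∃ n, p^[n] v = u

/-- `f(𝔏(v))`, with value `+∞` at the root. -/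
noncomputable def fLink {V : Type*} (f : V → ℝ) (r : V) (L : V → V) (v : V) : EReal :=
  if v = r then ⊤ else (f (L v) : EReal)

/-- The persistence `pers(v) = f(𝔏(v)) - f(v)` of a vertex in a BHT. -/
noncomputable def persBHT {V : Type*} (f : V → ℝ) (r : V) (L : V → V) (v : V) : EReal :=
  fLink f r L v - (f v : EReal)

namespace BHTGraph

variable {V E : Type*} (G : BHTGraph V E)

/-- The component of `v` dies at the edge `e`: `v` is the minimum of its component
just before `e` is added, and no longer after. -/
def DiesAt (pos : V ⊕ E → ℕ) (v : V) (e : E) : Prop :=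
  G.IsCompMin pos (pos (.inr e)) v v ∧ ¬ G.IsCompMin pos (pos (.inr e) + 1) v v

/-- The death value of the component created by `v` (`+∞` if permanent). -/
noncomputable def deathVal (f : V → ℝ) (pos : V ⊕ E → ℕ) (v : V) : EReal :=
  if h : ∃ e, G.DiesAt pos v e then ((G.sig f (.inr h.choose) : ℝ) : EReal) else ⊤

/-- The degree-0 persistence diagram of `(G, f)`, as a multiset of intervals
`[birth, death)` (including trivial intervals). -/
noncomputable def PD0 [Fintype V] (f : V → ℝ) (pos : V ⊕ E → ℕ) : Multiset (EReal × EReal) :=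
  Finset.univ.val.map fun v : V => ((f v : EReal), G.deathVal f pos v)

end BHTGraph

/-- The nontrivial part of a multiset of intervals. -/
noncomputable def nontriv (M : Multiset (EReal × EReal)) : Multiset (EReal × EReal) :=
  M.filter fun ab => ab.1 < ab.2

/-- The 0-low-persistence filter associated to a BHT `(p, L)` rooted at `r`. -/
noncomputable def LPF {V : Type*} [Fintype V] (f : V → ℝ) (r : V) (p L : V → V)
    (ε : ℝ) (v : V) : ℝ :=
  (insert (f v) ((Finset.univ.filter fun u => Anc p u v ∧ persBHT f r L u < (ε : EReal)).image
    fun u => f (L u))).max' (Finset.insert_nonempty _ _)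

/-!
The linking edge `e` of `v` is the edge whose arrival merges the component of `v` in `G_{<e}`,
of which `v` is the `≺`-minimum, with a component containing the parent `p v ≺ v`; hence some
endpoint of `e` lies in the component of `v`. Every vertex `w` of that component satisfies
`f v ≤ f w` by minimality of `v` and `f w ≤ f e = f (𝔏 v)` because `w ≺ e`. A path from `v` to
that endpoint inside the component, followed if necessary by `e` itself, is the required path.
-/

namespace Relation.ReflTransGen

variable {α : Type*} {r : α → α → Prop} {P : α → Prop} {a b : α}

theorem restrict (h : ReflTransGen r a b) (hP : ∀ c, ReflTransGen r a c → P c) :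
    ReflTransGen (fun x y => r x y ∧ P x ∧ P y) a b := by
  induction h with
  | refl => exact .refl
  | tail hac hcb ih => exact ih.tail ⟨hcb, hP _ hac, hP _ (hac.tail hcb)⟩

end Relation.ReflTransGen

namespace BHTGraph

variable {V E : Type*} {G : BHTGraph V E} {f : V → ℝ} {pos : V ⊕ E → ℕ} {k : ℕ}
  {e : E} {u v w : V}

theorem Ends.symm (h : G.Ends e v w) : G.Ends e w v := Or.symm h

variable (pos) in
theorem eq_maxEnd_or_ends_maxEnd (hu : u = G.src e ∨ u = G.tgt e) :
    u = G.maxEnd pos e ∨ G.Ends e u (G.maxEnd pos e) := by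
  unfold maxEnd
  split_ifs <;> rcases hu with rfl | rfl <;> simp [Ends]

namespace IsGOrdering

variable (hord : G.IsGOrdering f pos)
include hord

theorem f_le_of_pos_le (h : pos (.inl v) ≤ pos (.inl w)) : f v ≤ f w :=
  hord.2.1 (.inl v) (.inl w) h

theorem pos_lt_of_ends (h : G.Ends e v w) : pos (.inl w) < pos (.inr e) := by
  rcases h with ⟨-, rfl⟩ | ⟨rfl, -⟩
  exacts [(hord.2.2 e).2, (hord.2.2 e).1]

theorem f_maxEnd : f (G.maxEnd pos e) = max (f (G.src e)) (f (G.tgt e)) := by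
  unfold maxEnd
  split_ifs with h
  · exact (max_eq_right (hord.f_le_of_pos_le h)).symm
  · exact (max_eq_left (hord.f_le_of_pos_le (le_of_not_ge h))).symm

theorem f_le_f_maxEnd (h : pos (.inl v) < pos (.inr e)) : f v ≤ f (G.maxEnd pos e) := by
  rw [hord.f_maxEnd]
  exact hord.2.1 (.inl v) (.inr e) h.le

end IsGOrdering

theorem ConnB.symm (h : G.ConnB pos k v w) : G.ConnB pos k w v :=
  ⟨h.2.1, h.1, Relation.ReflTransGen.mono (fun _ _ ⟨e, he, hends⟩ => ⟨e, he, hends.symm⟩) _ _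
    (Relation.ReflTransGen.swap _ _ h.2.2)⟩

theorem ConnB.tail (hord : G.IsGOrdering f pos) (h : G.ConnB pos k v u)
    (he : pos (.inr e) < k) (hends : G.Ends e u w) : G.ConnB pos k v w :=
  ⟨h.1, (hord.pos_lt_of_ends hends).trans he, h.2.2.tail ⟨e, he, hends⟩⟩

theorem IsGOrdering.connB_of_reflTransGen (hord : G.IsGOrdering f pos)
    (hv : pos (.inl v) < k)
    (h : Relation.ReflTransGen (fun x y => ∃ e, pos (.inr e) < k ∧ G.Ends e x y) v w) :
    G.ConnB pos k v w := by
  induction h with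
  | refl => exact ⟨hv, hv, .refl⟩
  | tail _ hstep ih =>
    obtain ⟨e, he, hends⟩ := hstep
    exact ih.tail hord he hends

theorem IsGOrdering.connB_or_connB_endpoint (hord : G.IsGOrdering f pos)
    (h : G.ConnB pos (pos (.inr e) + 1) v w) :
    G.ConnB pos (pos (.inr e)) v w ∨
      G.ConnB pos (pos (.inr e)) v (G.src e) ∨ G.ConnB pos (pos (.inr e)) v (G.tgt e) := by
  obtain ⟨hv, -, hpath⟩ := h
  have hv' : pos (.inl v) < pos (.inr e) :=
    lt_of_le_of_ne (Nat.lt_succ_iff.1 hv) fun h => Sum.inl_ne_inr (hord.1 h)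
  induction hpath with
  | refl => exact .inl ⟨hv', hv', .refl⟩
  | tail _ hstep ih =>
    obtain ⟨e', he', hends⟩ := hstep
    rcases ih with hc | hendpoint
    · rcases (Nat.lt_succ_iff.1 he').lt_or_eq with hlt | heq
      · exact .inl (hc.tail hord hlt hends)
      · obtain rfl : e' = e := Sum.inr_injective (hord.1 heq)
        rcases hends with ⟨hsrc, -⟩ | ⟨-, htgt⟩
        · exact .inr (.inl (hsrc ▸ hc))
        · exact .inr (.inr (htgt ▸ hc))
    · exact .inr hendpoint

namespace IsCompMin

variable (hord : G.IsGOrdering f pos) (hmin : G.IsCompMin pos (pos (.inr e)) v v)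
include hord hmin

theorem f_mem_Icc (h : G.ConnB pos (pos (.inr e)) v w) :
    f w ∈ Set.Icc (f v) (f (G.maxEnd pos e)) :=
  ⟨hord.f_le_of_pos_le (hmin.2 w h), hord.f_le_f_maxEnd h.2.1⟩

theorem reflTransGen_Icc (h : G.ConnB pos (pos (.inr e)) v w) :
    Relation.ReflTransGen
      (fun x y => (∃ e, G.Ends e x y) ∧
        f x ∈ Set.Icc (f v) (f (G.maxEnd pos e)) ∧ f y ∈ Set.Icc (f v) (f (G.maxEnd pos e)))
      v w := by
  obtain ⟨hv, -, hpath⟩ := h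
  refine Relation.ReflTransGen.mono ?_ _ _
    (hpath.restrict fun c hc => f_mem_Icc hord hmin (hord.connB_of_reflTransGen hv hc))
  rintro x y ⟨⟨e', -, hends⟩, hx, hy⟩
  exact ⟨⟨e', hends⟩, hx, hy⟩

end IsCompMin

namespace IsBHT

variable {r : V} {p L : V → V} (hbht : G.IsBHT f pos r p L)
include hbht

theorem parent_ne (hv : v ≠ r) : p v ≠ v := by
  obtain ⟨n, hn⟩ := hbht.reaches v
  intro h
  exact hv (Function.iterate_fixed h n ▸ hn)

theorem exists_connB_endpoint (hv : v ≠ r) :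
    ∃ e, G.IsCompMin pos (pos (.inr e)) v v ∧ L v = G.maxEnd pos e ∧
      ∃ u, (u = G.src e ∨ u = G.tgt e) ∧ G.ConnB pos (pos (.inr e)) v u := by
  obtain ⟨e, hmin, hpmin, hL⟩ := hbht.spec v hv
  have hord := hbht.ordering
  have hparent_not_connB : ¬ G.ConnB pos (pos (.inr e)) v (p v) := fun h =>
    hbht.parent_ne hv <| Sum.inl_injective <| hord.1 <| le_antisymm
      (hpmin.2 v ⟨hpmin.1.2.1, hpmin.1.2.1, .refl⟩) (hmin.2 _ h)
  refine ⟨e, hmin, hL, ?_⟩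
  rcases hord.connB_or_connB_endpoint hpmin.1.symm with h | h | h
  · exact absurd h hparent_not_connB
  · exact ⟨_, .inl rfl, h⟩
  · exact ⟨_, .inr rfl, h⟩

end IsBHT

end BHTGraph

theorem bht_path_to_link_general {V E : Type*}
    (G : BHTGraph V E) (f : V → ℝ) (pos : V ⊕ E → ℕ)
    (r : V) (p L : V → V) (hbht : G.IsBHT f pos r p L) :
    ∀ v, v ≠ r →
      Relation.ReflTransGen
        (fun x y => (∃ e, G.Ends e x y) ∧
          f x ∈ Set.Icc (f v) (f (L v)) ∧ f y ∈ Set.Icc (f v) (f (L v)))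
        v (L v) := by
  intro v hv
  obtain ⟨e, hmin, hL, u, hu, hvu⟩ := hbht.exists_connB_endpoint hv
  have hord := hbht.ordering
  rw [hL]
  rcases G.eq_maxEnd_or_ends_maxEnd pos hu with rfl | hends
  · exact hmin.reflTransGen_Icc hord hvu
  · have hfu := hmin.f_mem_Icc hord hvu
    exact (hmin.reflTransGen_Icc hord hvu).tail ⟨⟨e, hends⟩, hfu, hfu.1.trans hfu.2, le_rfl⟩

/-- For every non-root vertex `v` of a Basin Hierarchy Tree there is a path in the
graph from `v` to its linking vertex `𝔏(v)` all of whose vertices have signal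
values in the closed interval `[f(v), f(𝔏(v))]`. -/
theorem bht_path_to_link {V E : Type*} [Fintype V] [Fintype E]
    (G : BHTGraph V E) (hG : G.Connected) (f : V → ℝ) (pos : V ⊕ E → ℕ)
    (r : V) (p L : V → V) (hbht : G.IsBHT f pos r p L) :
    ∀ v, v ≠ r →
      Relation.ReflTransGen
        (fun x y => (∃ e, G.Ends e x y) ∧
          f x ∈ Set.Icc (f v) (f (L v)) ∧ f y ∈ Set.Icc (f v) (f (L v)))
        v (L v) :=
  bht_path_to_link_general G f pos r p L hbht
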